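/- arXiv:2501.17108 — 5 statements merged into one kernel-verified Lean document; each statement's English description precedes it below -/
import Mathlib

section
/- Let p ≥ 1 and q ≥ 1 be integers, s = ⌊(p−1)/2⌋ + q, and let β_{−s}, …, β_s be the unique real numbers satisfying Σ_{l=−s}^{s} β_l · l^r = 0 for every r ∈ {0,…,2s} with r ≠ p and Σ_{l=−s}^{s} β_l · l^p = p!. Then β_{−l} = (−1)^p · β_l for every l ∈ {0, 1, …, s}; in particular, if p is odd then β_0 = 0. -/
open Finset

/-- Symmetry of the optimal centered finite difference coefficients: if `p ≥ 1`, `q ≥ 1`,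
`s = ⌊(p-1)/2⌋ + q`, and `β_{-s}, …, β_s` satisfy `∑_l β_l l^r = 0` for `r ∈ {0,…,2s}`,
`r ≠ p`, and `∑_l β_l l^p = p!` (with `0^0 = 1`), then `β_{-l} = (-1)^p β_l` for every
`0 ≤ l ≤ s`; in particular `β_0 = 0` when `p` is odd. -/
theorem centered_fd_coeffs_symm (p q : ℕ) (hp : 1 ≤ p) (hq : 1 ≤ q) (β : ℤ → ℝ)
    (h0 : ∀ r ≤ 2 * ((p - 1) / 2 + q), r ≠ p →
        ∑ l ∈ Finset.Icc (-(((p - 1) / 2 + q : ℕ) : ℤ)) (((p - 1) / 2 + q : ℕ) : ℤ),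
          β l * (l : ℝ) ^ r = 0)
    (hpfac : ∑ l ∈ Finset.Icc (-(((p - 1) / 2 + q : ℕ) : ℤ)) (((p - 1) / 2 + q : ℕ) : ℤ),
          β l * (l : ℝ) ^ p = p.factorial) :
    (∀ l : ℕ, l ≤ (p - 1) / 2 + q → β (-(l : ℤ)) = (-1) ^ p * β (l : ℤ)) ∧
      (Odd p → β 0 = 0) := by
  set s : ℕ := (p - 1) / 2 + q with hs
  set n : ℕ := 2 * s + 1 with hn
  have hsum : ∀ f : ℤ → ℝ, ∑ i : Fin n, f ((i : ℤ) - s)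
      = ∑ l ∈ Finset.Icc (-(s : ℤ)) (s : ℤ), f l := by
    intro f
    refine Finset.sum_bij' (fun i _ => (i : ℤ) - s)
      (fun l hl => ⟨(l + s).toNat, ?_⟩) ?_ ?_ ?_ ?_ ?_
    · simp only [Finset.mem_Icc] at hl
      omega
    · intro i _
      simp only [Finset.mem_Icc]
      have := i.isLt
      omega
    · intro l hl
      exact Finset.mem_univ _
    · intro i _
      apply Fin.ext
      simp only [Fin.val_mk]
      have := i.isLt
      omega
    · intro l hl
      simp only [Finset.mem_Icc] at hl
      simp only [Fin.val_mk]
      omega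
    · intro i _; rfl
  have hneg : ∀ f : ℤ → ℝ, ∑ l ∈ Finset.Icc (-(s : ℤ)) (s : ℤ), f (-l)
      = ∑ l ∈ Finset.Icc (-(s : ℤ)) (s : ℤ), f l := by
    intro f
    refine Finset.sum_bij' (fun l _ => -l) (fun l _ => -l) ?_ ?_ ?_ ?_ ?_ <;>
      simp +contextual [Finset.mem_Icc] <;> omega
  set δ : Fin n → ℝ := fun i => β (-((i : ℤ) - s)) - (-1) ^ p * β ((i : ℤ) - s) with hδ
  have hmoment : ∀ r : ℕ, r ≤ 2 * s →
      ∑ i : Fin n, δ i * (((i : ℤ) - s : ℤ) : ℝ) ^ r = 0 := by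
    intro r hr
    have e1 : ∑ i : Fin n, δ i * (((i : ℤ) - s : ℤ) : ℝ) ^ r
        = (∑ l ∈ Finset.Icc (-(s : ℤ)) (s : ℤ), β (-l) * (l : ℝ) ^ r)
          - (-1) ^ p * ∑ l ∈ Finset.Icc (-(s : ℤ)) (s : ℤ), β l * (l : ℝ) ^ r := by
      calc ∑ i : Fin n, δ i * (((i : ℤ) - s : ℤ) : ℝ) ^ r
          = ∑ i : Fin n, (fun l : ℤ =>
              β (-l) * (l : ℝ) ^ r - (-1) ^ p * (β l * (l : ℝ) ^ r)) ((i : ℤ) - s) := by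
            apply Finset.sum_congr rfl
            intro i _
            simp only [hδ]
            ring
        _ = ∑ l ∈ Finset.Icc (-(s : ℤ)) (s : ℤ),
              (β (-l) * (l : ℝ) ^ r - (-1) ^ p * (β l * (l : ℝ) ^ r)) :=
            hsum (fun l : ℤ => β (-l) * (l : ℝ) ^ r - (-1) ^ p * (β l * (l : ℝ) ^ r))
        _ = _ := by rw [Finset.sum_sub_distrib, ← Finset.mul_sum]
    have e2 : ∑ l ∈ Finset.Icc (-(s : ℤ)) (s : ℤ), β (-l) * (l : ℝ) ^ r
        = (-1) ^ r * ∑ l ∈ Finset.Icc (-(s : ℤ)) (s : ℤ), β l * (l : ℝ) ^ r := by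
      have h := hneg (fun m => β m * (-(m : ℝ)) ^ r)
      simp only [Int.cast_neg, neg_neg] at h
      rw [h, Finset.mul_sum]
      apply Finset.sum_congr rfl
      intro l _
      ring
    rw [e1, e2]
    rcases eq_or_ne r p with rfl | hrp
    · ring
    · rw [h0 r hr hrp]
      ring
  set w : Fin n → ℝ := fun i => (((i : ℤ) - s : ℤ) : ℝ) with hw
  have hwinj : Function.Injective w := by
    intro a b hab
    simp only [hw] at hab
    have h1 : ((a : ℤ) - s : ℤ) = (b : ℤ) - s := by exact_mod_cast hab
    have h2 : (a : ℕ) = (b : ℕ) := by omega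
    exact Fin.ext h2
  have hdet : (Matrix.vandermonde w).det ≠ 0 := by
    rw [Matrix.det_vandermonde]
    refine Finset.prod_ne_zero_iff.mpr fun i _ => Finset.prod_ne_zero_iff.mpr fun j hj => ?_
    rw [Finset.mem_Ioi] at hj
    exact sub_ne_zero.mpr fun h => absurd (hwinj h) hj.ne'
  have hδ0 : δ = 0 := by
    apply Matrix.eq_zero_of_mulVec_eq_zero (M := Matrix.transpose (Matrix.vandermonde w))
    · rwa [Matrix.det_transpose]
    · funext r
      simp only [Matrix.mulVec, dotProduct, Matrix.transpose_apply,
        Matrix.vandermonde_apply, Pi.zero_apply]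
      rw [← hmoment r (by omega)]
      apply Finset.sum_congr rfl
      intro i _
      rw [hw]; ring
  have key : ∀ l : ℕ, l ≤ s → β (-(l : ℤ)) = (-1) ^ p * β (l : ℤ) := by
    intro l hl
    have hi : s + l < n := by omega
    have h := congrFun hδ0 ⟨s + l, hi⟩
    simp only [hδ, Pi.zero_apply] at h
    have hv : ((⟨s + l, hi⟩ : Fin n) : ℤ) - s = l := by
      simp only [Fin.val_mk]
      push_cast
      ring
    rw [hv] at h
    linarith
  refine ⟨key, fun hodd => ?_⟩
  have h0' := key 0 (by omega)
  rw [hodd.neg_one_pow] at h0'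
  simp only [Nat.cast_zero, neg_zero] at h0'
  linarith
end

section
/- Let p ≥ 1 and q ≥ 1 be integers, s = ⌊(p−1)/2⌋ + q, and let β_{−s}, …, β_s be the unique real numbers satisfying Σ_{l=−s}^{s} β_l · l^r = 0 for r ∈ {0,…,2s}, r ≠ p, and Σ_{l=−s}^{s} β_l · l^p = p!. Then there exists a constant α^{p,q} ∈ ℝ depending only on p and q such that for every a ∈ ℝ and every function u: ℝ → ℝ of class C^{p+2q+2} on a neighborhood of a, one has, as h → 0⁺: (1/h^p) Σ_{l=−s}^{s} β_l · u(a + l·h) = u^{(p)}(a) + α^{p,q} · u^{(p+2q)}(a) · h^{2q} + O(h^{2q+2}). -/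
open Finset Asymptotics Topology

lemma myA {f g : ℝ → ℝ} {n : ℕ} (hf0 : f 0 = 0)
    (hd : ∀ᶠ x in 𝓝 (0:ℝ), HasDerivAt f (g x) x)
    (hg : g =O[𝓝 (0:ℝ)] fun x => x ^ n) :
    f =O[𝓝 (0:ℝ)] fun x => x ^ (n+1) := by
  obtain ⟨C, hC⟩ := hg.bound
  have hC' : ∀ᶠ x in 𝓝 (0:ℝ), ‖g x‖ ≤ max C 0 * ‖x ^ n‖ := by
    filter_upwards [hC] with x hx
    exact hx.trans (mul_le_mul_of_nonneg_right (le_max_left _ _) (norm_nonneg _))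
  obtain ⟨δ, hδ, hP⟩ := Metric.eventually_nhds_iff.mp (hd.and hC')
  rw [Asymptotics.isBigO_iff]
  refine ⟨max C 0, Metric.eventually_nhds_iff.mpr ⟨δ, hδ, ?_⟩⟩
  intro x hx
  rw [Real.dist_eq, sub_zero] at hx
  have habs : ∀ t ∈ Set.uIcc (0:ℝ) x, |t| ≤ |x| := by
    intro t ht
    rcases Set.mem_uIcc.mp ht with ⟨h1, h2⟩ | ⟨h1, h2⟩ <;>
      rw [abs_le] <;> constructor <;>
      cases' abs_le.mp (le_refl |x|) with _ _ <;> nlinarith [abs_nonneg x, le_abs_self x, neg_abs_le x]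
  have hmem : ∀ t ∈ Set.uIcc (0:ℝ) x, dist t 0 < δ := by
    intro t ht; rw [Real.dist_eq, sub_zero]; exact lt_of_le_of_lt (habs t ht) hx
  have key := Convex.norm_image_sub_le_of_norm_hasDerivWithin_le
    (f' := g) (C := max C 0 * |x| ^ n)
    (fun t ht => ((hP (hmem t ht)).1).hasDerivWithinAt)
    (fun t ht => by
      refine ((hP (hmem t ht)).2).trans ?_
      rw [Real.norm_eq_abs, abs_pow]
      exact mul_le_mul_of_nonneg_left (pow_le_pow_left₀ (abs_nonneg t) (habs t ht) n)
        (le_max_right C 0))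
    (convex_uIcc 0 x) Set.left_mem_uIcc Set.right_mem_uIcc
  rw [hf0, sub_zero, sub_zero, Real.norm_eq_abs] at key
  calc ‖f x‖ ≤ max C 0 * |x| ^ n * |x| := key
    _ = max C 0 * ‖x ^ (n+1)‖ := by
        rw [Real.norm_eq_abs, abs_pow, pow_succ]; ring

lemma myDeriv {u : ℝ → ℝ} {a : ℝ} {n : ℕ} (hu : ContDiffAt ℝ (n+1) u a) :
    ContDiffAt ℝ n (deriv u) a := by
  obtain ⟨t, ht, hts⟩ := hu.contDiffOn le_rfl (by simp)
  obtain ⟨s, hss, hso, has⟩ := mem_nhds_iff.mp ht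
  have h2 : ContDiffOn ℝ n (deriv u) s :=
    (hts.mono hss).deriv_of_isOpen hso (by exact_mod_cast le_rfl)
  exact h2.contDiffAt (hso.mem_nhds has)

lemma myTaylor (n : ℕ) (u : ℝ → ℝ) (a : ℝ) (hu : ContDiffAt ℝ (n+1) u a) :
    (fun x => u (a+x) - ∑ i ∈ Finset.range (n+1), x^i / (i.factorial : ℝ) * iteratedDeriv i u a)
      =O[𝓝 (0:ℝ)] fun x => x^(n+1) := by
  induction n generalizing u with
  | zero =>
    have hdiff : DifferentiableAt ℝ (fun x => u (a + x)) 0 := by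
      have h1 : DifferentiableAt ℝ u (a + 0) := by
        simpa using hu.differentiableAt (by norm_num)
      exact h1.comp 0 (differentiableAt_id.const_add a)
    have := hdiff.isBigO_sub
    simp only [add_zero] at this
    refine (this.congr ?_ ?_) <;> intro x <;> simp [iteratedDeriv_zero]
  | succ n ih =>
    have hd1 : ContDiffAt ℝ (n+1) (deriv u) a := myDeriv (by exact_mod_cast hu)
    have IH := ih (deriv u) hd1
    set g : ℝ → ℝ := fun x =>
      deriv u (a+x) - ∑ i ∈ Finset.range (n+1), x^i / (i.factorial : ℝ) * iteratedDeriv i (deriv u) a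
      with hgdef
    have hdiffev : ∀ᶠ x in 𝓝 (0:ℝ), DifferentiableAt ℝ u (a + x) := by
      have h1 : ∀ᶠ y in 𝓝 a, DifferentiableAt ℝ u y := by
        filter_upwards [hu.eventually (by simp)] with y hy
        exact hy.differentiableAt (by simp)
      have h2 : Filter.Tendsto (fun x : ℝ => a + x) (𝓝 0) (𝓝 a) := by
        simpa using (continuous_add_left a).tendsto (0:ℝ)
      exact h2.eventually h1
    have hder : ∀ᶠ x in 𝓝 (0:ℝ), HasDerivAt
        (fun x => u (a+x) - ∑ i ∈ Finset.range (n+2), x^i / (i.factorial : ℝ) * iteratedDeriv i u a)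
        (g x) x := by
      filter_upwards [hdiffev] with x hx
      have h1 : HasDerivAt (fun x => u (a+x)) (deriv u (a+x)) x := by
        have := (hx.hasDerivAt).comp x ((hasDerivAt_id x).const_add a)
        simpa [Function.comp_def] using this
      have h2 : HasDerivAt (fun x : ℝ => ∑ i ∈ Finset.range (n+2),
            x^i / (i.factorial : ℝ) * iteratedDeriv i u a)
          (∑ i ∈ Finset.range (n+1), x^i / (i.factorial : ℝ) * iteratedDeriv i (deriv u) a) x := by
        have h3 : HasDerivAt (fun x : ℝ => ∑ i ∈ Finset.range (n+2),
              x^i / (i.factorial : ℝ) * iteratedDeriv i u a)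
            (∑ i ∈ Finset.range (n+2),
              (i * x^(i-1)) / (i.factorial : ℝ) * iteratedDeriv i u a) x := by
          apply HasDerivAt.fun_sum
          intro i _
          exact (((hasDerivAt_pow i x).div_const (i.factorial : ℝ)).mul_const _)
        convert h3 using 1
        rw [Finset.sum_range_succ' (fun i => ((i:ℝ) * x^(i-1)) / (i.factorial : ℝ) * iteratedDeriv i u a) (n+1)]
        simp only [Nat.cast_zero, zero_mul, zero_div, add_zero, Nat.cast_add, Nat.cast_one,
          Nat.add_sub_cancel]
        apply Finset.sum_congr rfl
        intro i _
        rw [iteratedDeriv_succ', Nat.factorial_succ]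
        push_cast
        rw [mul_comm ((i:ℝ)+1) (i.factorial : ℝ), ← div_div, mul_div_assoc]
        rw [mul_div_cancel_left₀ _ (by positivity : ((i:ℝ)+1) ≠ 0)]
      exact h1.sub h2
    have hzero : (fun x => u (a+x) - ∑ i ∈ Finset.range (n+2),
        x^i / (i.factorial : ℝ) * iteratedDeriv i u a) 0 = 0 := by
      simp only [add_zero]
      rw [Finset.sum_eq_single 0]
      · simp [iteratedDeriv_zero]
      · intro i _ hi
        simp [zero_pow hi]
      · simp
    exact myA hzero hder IH

/-- Accuracy of the optimal centered finite differences: if `p ≥ 1`, `q ≥ 1`,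
`s = ⌊(p-1)/2⌋ + q`, and `β_{-s}, …, β_s` are the unique reals with `∑_l β_l l^r = 0`
for `r ∈ {0,…,2s}`, `r ≠ p`, and `∑_l β_l l^p = p!`, then there is a constant `α = α^{p,q}`
(depending only on `p, q`) such that for every `a ∈ ℝ` and every `u` of class `C^{p+2q+2}`
on a neighborhood of `a`,
`h^{-p} ∑_l β_l u(a + l h) = u^{(p)}(a) + α u^{(p+2q)}(a) h^{2q} + O(h^{2q+2})` as `h → 0⁺`. -/
theorem centered_fd_accuracy (p q : ℕ) (hp : 1 ≤ p) (hq : 1 ≤ q) (β : ℤ → ℝ)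
    (h0 : ∀ r ≤ 2 * ((p - 1) / 2 + q), r ≠ p →
        ∑ l ∈ Finset.Icc (-(((p - 1) / 2 + q : ℕ) : ℤ)) (((p - 1) / 2 + q : ℕ) : ℤ),
          β l * (l : ℝ) ^ r = 0)
    (hpfac : ∑ l ∈ Finset.Icc (-(((p - 1) / 2 + q : ℕ) : ℤ)) (((p - 1) / 2 + q : ℕ) : ℤ),
          β l * (l : ℝ) ^ p = p.factorial) :
    ∃ α : ℝ, ∀ (a : ℝ) (u : ℝ → ℝ), ContDiffAt ℝ (p + 2 * q + 2) u a →
      (fun h : ℝ =>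
          (∑ l ∈ Finset.Icc (-(((p - 1) / 2 + q : ℕ) : ℤ)) (((p - 1) / 2 + q : ℕ) : ℤ),
              β l * u (a + (l : ℝ) * h)) / h ^ p
            - iteratedDeriv p u a - α * iteratedDeriv (p + 2 * q) u a * h ^ (2 * q))
        =O[𝓝[>] (0 : ℝ)] fun h : ℝ => h ^ (2 * q + 2) := by
  set s : ℕ := (p - 1) / 2 + q with hs
  set S : Finset ℤ := Finset.Icc (-(s:ℤ)) (s:ℤ) with hS
  set m : ℕ → ℝ := fun r => ∑ l ∈ S, β l * (l : ℝ) ^ r with hm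
  -- reindexing by negation
  have hneg : ∀ f : ℤ → ℝ, ∑ l ∈ S, f (-l) = ∑ l ∈ S, f l := by
    intro f
    apply Finset.sum_equiv (Equiv.neg ℤ)
    · intro l; simp [hS, Finset.mem_Icc]; omega
    · intro l _; rfl
  have hm_neg : ∀ r : ℕ, ∑ l ∈ S, β (-l) * (l:ℝ)^r = (-1:ℝ)^r * m r := by
    intro r
    have h1 := hneg (fun l => β (-l) * ((l:ℤ):ℝ)^r)
    simp only [neg_neg] at h1
    rw [← h1]
    rw [hm, Finset.mul_sum]
    apply Finset.sum_congr rfl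
    intro l _
    push_cast
    ring
  -- the difference function and its vanishing moments
  set δf : ℤ → ℝ := fun l => β l - (-1:ℝ)^p * β (-l) with hδf
  have hδmom : ∀ r ≤ 2*s, ∑ l ∈ S, δf l * (l:ℝ)^r = 0 := by
    intro r hr
    have expand : ∑ l ∈ S, δf l * (l:ℝ)^r
        = m r - (-1:ℝ)^p * ((-1:ℝ)^r * m r) := by
      rw [← hm_neg r]
      simp only [hm]
      rw [Finset.mul_sum, ← Finset.sum_sub_distrib]
      exact Finset.sum_congr rfl fun l _ => by simp only [hδf]; ring
    rw [expand]
    rcases eq_or_ne r p with rfl | hne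
    · rw [← mul_assoc, ← mul_pow]
      norm_num
    · simp only [hm]
      rw [h0 r hr hne]
      ring
  -- Lagrange interpolation: δf vanishes on S
  have hcard : S.card = 2*s + 1 := by
    rw [hS, Int.card_Icc]
    omega
  have hinj : Set.InjOn (fun l : ℤ => (l:ℝ)) S := Int.cast_injective.injOn
  have hδ0 : ∀ l0 ∈ S, δf l0 = 0 := by
    intro l0 hl0
    set P : Polynomial ℝ := Lagrange.basis S (fun l : ℤ => (l:ℝ)) l0 with hP
    have hdeg : P.natDegree < 2*s + 1 := by
      rw [hP, Lagrange.natDegree_basis hinj hl0, hcard]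
      omega
    have key1 : ∑ l ∈ S, δf l * P.eval (l:ℝ) = δf l0 := by
      rw [Finset.sum_eq_single l0]
      · rw [hP, Lagrange.eval_basis_self hinj hl0, mul_one]
      · intro l hl hne
        rw [hP, Lagrange.eval_basis_of_ne hne.symm hl, mul_zero]
      · intro h; exact absurd hl0 h
    have key2 : ∑ l ∈ S, δf l * P.eval (l:ℝ) = 0 := by
      have heval : ∀ l : ℤ, P.eval (l:ℝ) = ∑ r ∈ Finset.range (2*s+1), P.coeff r * (l:ℝ)^r :=
        fun l => Polynomial.eval_eq_sum_range' hdeg _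
      simp_rw [heval, Finset.mul_sum]
      rw [Finset.sum_comm]
      refine Finset.sum_eq_zero fun r hr => ?_
      have : ∑ l ∈ S, δf l * (P.coeff r * (l:ℝ)^r)
          = P.coeff r * ∑ l ∈ S, δf l * (l:ℝ)^r := by
        rw [Finset.mul_sum]
        exact Finset.sum_congr rfl fun l _ => by ring
      rw [this, hδmom r (by simpa using Nat.lt_succ_iff.mp (Finset.mem_range.mp hr)), mul_zero]
    rw [← key1, key2]
  have hsym : ∀ l ∈ S, β (-l) = (-1:ℝ)^p * β l := by
    intro l hl
    have h1 := hδ0 l hl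
    simp only [hδf, sub_eq_zero] at h1
    rw [h1, ← mul_assoc, ← mul_pow]
    norm_num
  -- parity vanishing
  have hparity : ∀ r : ℕ, (p + r) % 2 = 1 → m r = 0 := by
    intro r hpr
    have h1 : ∑ l ∈ S, β (-l) * (l:ℝ)^r = (-1:ℝ)^p * m r := by
      rw [hm, Finset.mul_sum]
      refine Finset.sum_congr rfl fun l hl => ?_
      rw [hsym l hl]; ring
    rw [hm_neg r] at h1
    rcases Nat.even_or_odd p with hpe | hpo
    · have hro : Odd r := by
        rw [Nat.odd_iff]; rw [Nat.even_iff] at hpe; omega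
      rw [hpe.neg_one_pow, hro.neg_one_pow] at h1
      linarith
    · have hre : Even r := by
        rw [Nat.even_iff]; rw [Nat.odd_iff] at hpo; omega
      rw [hre.neg_one_pow, hpo.neg_one_pow] at h1
      linarith
  have hzero : ∀ r ≤ p + 2*q + 1, r ≠ p → r ≠ p + 2*q → m r = 0 := by
    intro r hr hne1 hne2
    rcases le_or_gt r (2*s) with h | h
    · exact h0 r h hne1
    · exact hparity r (by omega)
  -- the constant
  refine ⟨m (p + 2*q) / ((p + 2*q).factorial : ℝ), ?_⟩
  intro a u hu
  have hu' : ContDiffAt ℝ ((p + 2*q + 1 : ℕ) + 1) u a := by exact_mod_cast hu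
  have hR : (fun x => u (a+x) - ∑ i ∈ Finset.range (p+2*q+2),
        x^i / (i.factorial : ℝ) * iteratedDeriv i u a)
      =O[𝓝 (0:ℝ)] fun x => x^(p+2*q+2) := myTaylor (p+2*q+1) u a hu'
  set R : ℝ → ℝ := fun x => u (a+x) - ∑ i ∈ Finset.range (p+2*q+2),
      x^i / (i.factorial : ℝ) * iteratedDeriv i u a with hRdef
  have hu_split : ∀ x : ℝ, u (a+x)
      = (∑ i ∈ Finset.range (p+2*q+2), x^i / (i.factorial : ℝ) * iteratedDeriv i u a) + R x := by
    intro x; simp only [hRdef]; ring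
  -- the Taylor polynomial part of the sum
  have hA : ∀ h : ℝ, ∑ l ∈ S, β l * (∑ i ∈ Finset.range (p+2*q+2),
        ((l:ℝ)*h)^i / (i.factorial : ℝ) * iteratedDeriv i u a)
      = iteratedDeriv p u a * h^p
        + (m (p + 2*q) / ((p + 2*q).factorial : ℝ)) * iteratedDeriv (p+2*q) u a * h^(p+2*q) := by
    intro h
    calc ∑ l ∈ S, β l * (∑ i ∈ Finset.range (p+2*q+2),
          ((l:ℝ)*h)^i / (i.factorial : ℝ) * iteratedDeriv i u a)
        = ∑ i ∈ Finset.range (p+2*q+2), ∑ l ∈ S,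
            β l * (((l:ℝ)*h)^i / (i.factorial : ℝ) * iteratedDeriv i u a) := by
          simp_rw [Finset.mul_sum]
          exact Finset.sum_comm
      _ = ∑ i ∈ Finset.range (p+2*q+2), m i * (h^i / (i.factorial : ℝ) * iteratedDeriv i u a) := by
          refine Finset.sum_congr rfl fun i _ => ?_
          simp only [hm]
          rw [Finset.sum_mul]
          exact Finset.sum_congr rfl fun l _ => by ring
      _ = ∑ i ∈ ({p, p + 2*q} : Finset ℕ), m i * (h^i / (i.factorial : ℝ) * iteratedDeriv i u a) := by
          symm
          apply Finset.sum_subset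
          · intro i hi
            simp only [Finset.mem_insert, Finset.mem_singleton] at hi
            rw [Finset.mem_range]
            omega
          · intro i hi hni
            simp only [Finset.mem_insert, Finset.mem_singleton, not_or] at hni
            have hile : i ≤ p + 2*q + 1 := Nat.lt_succ_iff.mp (Finset.mem_range.mp hi)
            rw [hzero i hile hni.1 hni.2, zero_mul]
      _ = m p * (h^p / (p.factorial : ℝ) * iteratedDeriv p u a)
          + m (p+2*q) * (h^(p+2*q) / ((p+2*q).factorial : ℝ) * iteratedDeriv (p+2*q) u a) := by
          rw [Finset.sum_insert (by simp; omega), Finset.sum_singleton]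
      _ = iteratedDeriv p u a * h^p
          + (m (p + 2*q) / ((p + 2*q).factorial : ℝ)) * iteratedDeriv (p+2*q) u a * h^(p+2*q) := by
          have h1 : m p = (p.factorial : ℝ) := by simp only [hm]; exact hpfac
          rw [h1]
          have h2 : (p.factorial : ℝ) ≠ 0 := Nat.cast_ne_zero.mpr p.factorial_ne_zero
          field_simp
  -- key pointwise identity for h ≠ 0
  have hEq : ∀ h : ℝ, h ≠ 0 →
      (∑ l ∈ S, β l * u (a + (l:ℝ) * h)) / h ^ p
          - iteratedDeriv p u a
          - (m (p + 2*q) / ((p + 2*q).factorial : ℝ)) * iteratedDeriv (p + 2*q) u a * h ^ (2*q)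
        = (∑ l ∈ S, β l * R ((l:ℝ)*h)) * (h^p)⁻¹ := by
    intro h hne
    have hsplit : ∑ l ∈ S, β l * u (a + (l:ℝ) * h)
        = (iteratedDeriv p u a * h^p
            + (m (p + 2*q) / ((p + 2*q).factorial : ℝ)) * iteratedDeriv (p+2*q) u a * h^(p+2*q))
          + ∑ l ∈ S, β l * R ((l:ℝ)*h) := by
      rw [← hA h, ← Finset.sum_add_distrib]
      refine Finset.sum_congr rfl fun l _ => ?_
      rw [hu_split ((l:ℝ)*h)]
      ring
    rw [hsplit]
    have hpne : (h:ℝ)^p ≠ 0 := pow_ne_zero _ hne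
    rw [pow_add]
    field_simp
    ring
  -- conclude with big-O manipulations
  have hBsum : (fun h : ℝ => ∑ l ∈ S, β l * R ((l:ℝ)*h)) =O[𝓝 (0:ℝ)]
      fun h : ℝ => h^(p+2*q+2) := by
    apply Asymptotics.IsBigO.fun_sum
    intro l _
    have ht : Filter.Tendsto (fun h : ℝ => (l:ℝ)*h) (𝓝 0) (𝓝 0) := by
      simpa using (continuous_mul_left (l:ℝ)).tendsto (0:ℝ)
    have hcomp : (fun h : ℝ => R ((l:ℝ)*h)) =O[𝓝 (0:ℝ)] fun h => ((l:ℝ)*h)^(p+2*q+2) :=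
      hR.comp_tendsto ht
    have h2 : (fun h : ℝ => ((l:ℝ)*h)^(p+2*q+2)) =O[𝓝 (0:ℝ)] fun h => h^(p+2*q+2) := by
      simp_rw [mul_pow]
      exact (isBigO_refl (fun h : ℝ => h^(p+2*q+2)) _).const_mul_left _
    exact ((hcomp.trans h2).const_mul_left (β l))
  have hfinal := (hBsum.mono nhdsWithin_le_nhds).mul
    (isBigO_refl (fun h : ℝ => (h^p)⁻¹) (𝓝[>] (0:ℝ)))
  refine hfinal.congr' ?_ ?_
  · filter_upwards [self_mem_nhdsWithin] with h hh
    exact (hEq h (ne_of_gt hh)).symm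
  · filter_upwards [self_mem_nhdsWithin] with h hh
    have hne : (h:ℝ) ≠ 0 := ne_of_gt hh
    rw [show p+2*q+2 = p + (2*q+2) by ring, pow_add, mul_comm ((h:ℝ)^p) _, mul_assoc,
      mul_inv_cancel₀ (pow_ne_zero _ hne), mul_one]
end

section
/- Conservation form of the approximate Lax-Wendroff scheme: Fix an integer R ≥ 1 and reals h > 0, Δt > 0. For 1 ≤ l ≤ R−1 set μ_l = ⌈(R−l)/2⌉. Let (u_i)_{i∈ℤ}, (f̂_{i+1/2})_{i∈ℤ}, and for each 1 ≤ l ≤ R−1 (f̃^{(l)}_i)_{i∈ℤ} be arbitrary families of real numbers. Define ũ^{(1)}_i = −(f̂_{i+1/2} − f̂_{i−1/2})/h, and for 1 ≤ l ≤ R−1, ũ^{(l+1)}_i = −(1/h) Σ_{s=−μ_l}^{μ_l} β_s^{1,μ_l} f̃^{(l)}_{i+s}, and finally u'_i = u_i + Σ_{l=1}^{R} ((Δt)^l / l!) · ũ^{(l)}_i. Then, setting ĝ_{i+1/2} = f̂_{i+1/2} + Σ_{l=1}^{R−1} ((Δt)^l/(l+1)!) Σ_{s=−μ_l}^{μ_l−1}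 γ_s^{μ_l} f̃^{(l)}_{i+s+1}, one has u'_i = u_i − (Δt/h)(ĝ_{i+1/2} − ĝ_{i−1/2}) for every i ∈ ℤ. -/
open Finset

/-- **Conservation form of the approximate Lax–Wendroff scheme.**
With `μ_l = ⌈(R-l)/2⌉`, coefficients `B q = β^{1,q}` (the unique centered finite difference
coefficients for the first derivative of order `2q`) and `G q = γ^{q}` (their conservative
form), given arbitrary families `u_i`, `f̂_{i+1/2}` (written `fhat i`) and `f̃^{(l)}_i`
(written `ftil l i`), define
`ũ^{(1)}_i = -(f̂_{i+1/2} - f̂_{i-1/2})/h`,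
`ũ^{(l+1)}_i = -(1/h) ∑_{s=-μ_l}^{μ_l} β_s^{1,μ_l} f̃^{(l)}_{i+s}` for `1 ≤ l ≤ R-1`, and
`u'_i = u_i + ∑_{l=1}^R (Δt^l/l!) ũ^{(l)}_i`.  Then, with
`ĝ_{i+1/2} = f̂_{i+1/2} + ∑_{l=1}^{R-1} (Δt^l/(l+1)!) ∑_{s=-μ_l}^{μ_l-1} γ_s^{μ_l} f̃^{(l)}_{i+s+1}`,
one has `u'_i = u_i - (Δt/h)(ĝ_{i+1/2} - ĝ_{i-1/2})` for all `i`. -/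
theorem approx_LW_conservation_form (R : ℕ) (hR : 1 ≤ R) (h Δt : ℝ)
    (hh : 0 < h) (hΔt : 0 < Δt)
    (μ : ℕ → ℕ) (hμ : ∀ l, μ l = (R - l + 1) / 2)
    (B G : ℕ → ℤ → ℝ)
    (hB : ∀ q : ℕ, 1 ≤ q →
      (∀ r ≤ 2 * q, r ≠ 1 →
          ∑ l ∈ Finset.Icc (-(q : ℤ)) (q : ℤ), B q l * (l : ℝ) ^ r = 0) ∧
        ∑ l ∈ Finset.Icc (-(q : ℤ)) (q : ℤ), B q l * (l : ℝ) = 1)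
    (hG : ∀ q : ℕ, 1 ≤ q →
      G q ((q : ℤ) - 1) = B q (q : ℤ) ∧
        (∀ l : ℤ, -(q : ℤ) + 1 ≤ l → l ≤ (q : ℤ) - 1 →
          G q (l - 1) - G q l = B q l) ∧
        -G q (-(q : ℤ)) = B q (-(q : ℤ)))
    (u fhat u' ghat : ℤ → ℝ) (ftil : ℕ → ℤ → ℝ) (utld : ℕ → ℤ → ℝ)
    (hu1 : ∀ i : ℤ, utld 1 i = -(fhat i - fhat (i - 1)) / h)
    (hu2 : ∀ l : ℕ, 1 ≤ l → l ≤ R - 1 → ∀ i : ℤ,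
      utld (l + 1) i =
        -(1 / h) * ∑ s ∈ Finset.Icc (-(μ l : ℤ)) (μ l : ℤ), B (μ l) s * ftil l (i + s))
    (hu' : ∀ i : ℤ,
      u' i = u i + ∑ l ∈ Finset.Icc 1 R, (Δt ^ l / l.factorial) * utld l i)
    (hg : ∀ i : ℤ,
      ghat i = fhat i + ∑ l ∈ Finset.Icc 1 (R - 1), (Δt ^ l / (l + 1).factorial) *
        ∑ s ∈ Finset.Icc (-(μ l : ℤ)) ((μ l : ℤ) - 1), G (μ l) s * ftil l (i + s + 1)) :
    ∀ i : ℤ, u' i = u i - (Δt / h) * (ghat i - ghat (i - 1)) := by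
  have hne : h ≠ 0 := ne_of_gt hh
  -- Telescoping identity for the conservative coefficients
  have tele : ∀ q : ℕ, 1 ≤ q → ∀ f : ℤ → ℝ, ∀ i : ℤ,
      ∑ s ∈ Finset.Icc (-(q:ℤ)) (q:ℤ), B q s * f (i + s) =
        (∑ s ∈ Finset.Icc (-(q:ℤ)) ((q:ℤ)-1), G q s * f (i + s + 1)) -
        ∑ s ∈ Finset.Icc (-(q:ℤ)) ((q:ℤ)-1), G q s * f (i - 1 + s + 1) := by
    intro q hq f i
    obtain ⟨hGtop, hGmid, hGbot⟩ := hG q hq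
    have hq1 : (1:ℤ) ≤ (q:ℤ) := by exact_mod_cast hq
    have e0 : ∀ s ∈ Finset.Icc (-(q:ℤ)) ((q:ℤ)-1),
        G q s * f (i - 1 + s + 1) = G q s * f (i + s) := by
      intro s _
      have : i - 1 + s + 1 = i + s := by ring
      rw [this]
    rw [Finset.sum_congr rfl e0]
    have h1 : (∑ s ∈ Finset.Icc (-(q:ℤ)) ((q:ℤ)-1), G q s * f (i + s + 1))
        = ∑ s ∈ Finset.Icc (-(q:ℤ)+1) (q:ℤ), G q (s-1) * f (i + s) := by
      apply Finset.sum_nbij' (fun s => s + 1) (fun s => s - 1)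
      · intro a ha; simp only [Finset.mem_Icc] at *; omega
      · intro a ha; simp only [Finset.mem_Icc] at *; omega
      · intro a _; ring
      · intro a _; ring
      · intro a _
        have h2 : a + 1 - 1 = a := by ring
        have h3 : i + (a + 1) = i + a + 1 := by ring
        rw [h2, h3]
    rw [h1]
    have hs1 : Finset.Icc (-(q:ℤ)+1) (q:ℤ) = insert (q:ℤ) (Finset.Icc (-(q:ℤ)+1) ((q:ℤ)-1)) := by
      ext x; simp only [Finset.mem_Icc, Finset.mem_insert]; omega
    have hs2 : Finset.Icc (-(q:ℤ)) ((q:ℤ)-1) = insert (-(q:ℤ)) (Finset.Icc (-(q:ℤ)+1) ((q:ℤ)-1)) := by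
      ext x; simp only [Finset.mem_Icc, Finset.mem_insert]; omega
    have hs3 : Finset.Icc (-(q:ℤ)) (q:ℤ)
        = insert (-(q:ℤ)) (insert (q:ℤ) (Finset.Icc (-(q:ℤ)+1) ((q:ℤ)-1))) := by
      ext x; simp only [Finset.mem_Icc, Finset.mem_insert]; omega
    have hmemq : (q:ℤ) ∉ Finset.Icc (-(q:ℤ)+1) ((q:ℤ)-1) := by
      simp only [Finset.mem_Icc]; omega
    have hmemnq : -(q:ℤ) ∉ Finset.Icc (-(q:ℤ)+1) ((q:ℤ)-1) := by
      simp only [Finset.mem_Icc]; omega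
    have hmemnq2 : -(q:ℤ) ∉ insert (q:ℤ) (Finset.Icc (-(q:ℤ)+1) ((q:ℤ)-1)) := by
      simp only [Finset.mem_insert, Finset.mem_Icc]; omega
    rw [hs1, hs2, hs3, Finset.sum_insert hmemnq2, Finset.sum_insert hmemq,
      Finset.sum_insert hmemq, Finset.sum_insert hmemnq]
    have hmid : ∑ s ∈ Finset.Icc (-(q:ℤ)+1) ((q:ℤ)-1), B q s * f (i + s)
        = (∑ s ∈ Finset.Icc (-(q:ℤ)+1) ((q:ℤ)-1), G q (s-1) * f (i + s))
          - ∑ s ∈ Finset.Icc (-(q:ℤ)+1) ((q:ℤ)-1), G q s * f (i + s) := by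
      rw [← Finset.sum_sub_distrib]
      apply Finset.sum_congr rfl
      intro s hs
      simp only [Finset.mem_Icc] at hs
      rw [← hGmid s hs.1 hs.2]
      ring
    rw [← hGtop, ← hGbot] at *
    linarith [hmid]
  -- main computation
  intro i
  rw [hu' i, hg i, hg (i-1)]
  have hsplit : Finset.Icc 1 R = insert 1 (Finset.Icc 2 R) := by
    ext x; simp only [Finset.mem_Icc, Finset.mem_insert]; omega
  rw [hsplit, Finset.sum_insert (by simp)]
  have hshiftN : ∑ l ∈ Finset.Icc 2 R, (Δt ^ l / l.factorial) * utld l i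
      = ∑ l ∈ Finset.Icc 1 (R-1), (Δt ^ (l+1) / (l+1).factorial) * utld (l+1) i := by
    apply Finset.sum_nbij' (fun l => l - 1) (fun l => l + 1)
    · intro a ha; simp only [Finset.mem_Icc] at *; omega
    · intro a ha; simp only [Finset.mem_Icc] at *; omega
    · intro a ha; simp only [Finset.mem_Icc] at ha; omega
    · intro a ha; simp only [Finset.mem_Icc] at ha; omega
    · intro a ha
      simp only [Finset.mem_Icc] at ha
      have : a - 1 + 1 = a := by omega
      rw [this]
  rw [hshiftN]
  have hterm : ∀ l ∈ Finset.Icc 1 (R-1),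
      (Δt ^ (l+1) / (l+1).factorial) * utld (l+1) i
      = -(Δt/h) * ((Δt ^ l / (l+1).factorial) *
            (∑ s ∈ Finset.Icc (-(μ l : ℤ)) ((μ l : ℤ)-1), G (μ l) s * ftil l (i + s + 1))
          - (Δt ^ l / (l+1).factorial) *
            (∑ s ∈ Finset.Icc (-(μ l : ℤ)) ((μ l : ℤ)-1), G (μ l) s * ftil l (i - 1 + s + 1))) := by
    intro l hl
    simp only [Finset.mem_Icc] at hl
    have hμl : 1 ≤ μ l := by
      rw [hμ l]; omega
    rw [hu2 l hl.1 hl.2 i, tele (μ l) hμl (ftil l) i]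
    have hfac : ((l+1).factorial : ℝ) ≠ 0 := by
      exact_mod_cast (l+1).factorial_ne_zero
    field_simp
    ring
  rw [Finset.sum_congr rfl hterm, ← Finset.mul_sum, Finset.sum_sub_distrib]
  rw [hu1 i]
  simp only [Nat.factorial_one, Nat.cast_one, pow_one]
  field_simp
  ring
end

section
/- Accuracy of the time derivative of the flux evaluated on the approximate Taylor polynomial: Let R ≥ 1 and 1 ≤ k ≤ R be integers, let f: ℝ^m → ℝ^m be of class C^∞, let u: ℝ → ℝ^m be of class C^k on a neighborhood of a fixed t ∈ ℝ. Suppose that for each h > 0 we are given vectors ũ^{(0)}(h), …, ũ^{(k)}(h) ∈ ℝ^m with ũ^{(0)}(h) = u(t) and ũ^{(l)}(h) = u^{(l)}(t) + O(h^{R−l+1}) as h → 0⁺ for 1 ≤ l ≤ k. Define the polynomial T_h(ρ) = Σ_{l=0}^{k} (ρ^l / l!) · ũ^{(l)}(h). Then (d^k/dρ^k)[f(T_h(ρ))] evaluated at ρ = 0 equals (d^k/ds^k)[f(u(s))] evaluated at s = t, up to an error O(h^{R−k+1}) as h → 0⁺. -/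
open Finset Asymptotics Topology

section aux

variable {E F : Type*} [NormedAddCommGroup E] [NormedSpace ℝ E]
  [NormedAddCommGroup F] [NormedSpace ℝ F]

lemma iteratedFDeriv_eq_of_iteratedDeriv_eq {g1 g2 : ℝ → E} {j : ℕ} {x : ℝ}
    (h : iteratedDeriv j g1 x = iteratedDeriv j g2 x) :
    iteratedFDeriv ℝ j g1 x = iteratedFDeriv ℝ j g2 x := by
  ext v
  rw [iteratedFDeriv_apply_eq_iteratedDeriv_mul_prod,
    iteratedFDeriv_apply_eq_iteratedDeriv_mul_prod, h]

/-- Jet determination: the `k`-th derivative at `0` of `f ∘ g` only depends on the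
`k`-jet of `g` at `0`. -/
lemma iteratedDeriv_comp_eq_of_jet_eq (k : ℕ) (f : E → F) (hf : ContDiff ℝ (⊤ : ℕ∞) f)
    (g1 g2 : ℝ → E) (hg1 : ContDiffAt ℝ k g1 0) (hg2 : ContDiffAt ℝ k g2 0)
    (heq : ∀ j, j ≤ k → iteratedDeriv j g1 0 = iteratedDeriv j g2 0) :
    iteratedDeriv k (fun ρ => f (g1 ρ)) 0 = iteratedDeriv k (fun ρ => f (g2 ρ)) 0 := by
  obtain ⟨u1, hu1, hcd1⟩ := hg1.contDiffOn le_rfl (by simp)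
  obtain ⟨u2, hu2, hcd2⟩ := hg2.contDiffOn le_rfl (by simp)
  obtain ⟨ε, hε, hball⟩ := Metric.mem_nhds_iff.1 (Filter.inter_mem hu1 hu2)
  set s : Set ℝ := Metric.ball (0:ℝ) ε with hs_def
  have hs_open : IsOpen s := Metric.isOpen_ball
  have h0s : (0:ℝ) ∈ s := Metric.mem_ball_self hε
  have hsu : UniqueDiffOn ℝ s := hs_open.uniqueDiffOn
  have hcd1' : ContDiffOn ℝ k g1 s := hcd1.mono fun x hx => (hball hx).1
  have hcd2' : ContDiffOn ℝ k g2 s := hcd2.mono fun x hx => (hball hx).2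
  have hfOn : ContDiffOn ℝ k f Set.univ := (hf.of_le (by exact_mod_cast le_top)).contDiffOn
  set q := ftaylorSeriesWithin ℝ f Set.univ with hq_def
  have hq : HasFTaylorSeriesUpToOn k f q Set.univ :=
    hfOn.ftaylorSeriesWithin uniqueDiffOn_univ
  set p1 := ftaylorSeriesWithin ℝ g1 s with hp1_def
  set p2 := ftaylorSeriesWithin ℝ g2 s with hp2_def
  have h1 : HasFTaylorSeriesUpToOn k g1 p1 s := hcd1'.ftaylorSeriesWithin hsu
  have h2 : HasFTaylorSeriesUpToOn k g2 p2 s := hcd2'.ftaylorSeriesWithin hsu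
  have hc1 := hq.comp h1 (Set.mapsTo_univ _ _)
  have hc2 := hq.comp h2 (Set.mapsTo_univ _ _)
  have key1 : (q (g1 0)).taylorComp (p1 0) k = iteratedFDerivWithin ℝ k (f ∘ g1) s 0 :=
    hc1.eq_iteratedFDerivWithin_of_uniqueDiffOn le_rfl hsu h0s
  have key2 : (q (g2 0)).taylorComp (p2 0) k = iteratedFDerivWithin ℝ k (f ∘ g2) s 0 :=
    hc2.eq_iteratedFDerivWithin_of_uniqueDiffOn le_rfl hsu h0s
  have hg0 : g1 0 = g2 0 := by simpa using heq 0 (Nat.zero_le _)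
  have hpj : ∀ j, j ≤ k → p1 0 j = p2 0 j := by
    intro j hj
    show iteratedFDerivWithin ℝ j g1 s 0 = iteratedFDerivWithin ℝ j g2 s 0
    rw [iteratedFDerivWithin_of_isOpen j hs_open h0s,
      iteratedFDerivWithin_of_isOpen j hs_open h0s]
    exact iteratedFDeriv_eq_of_iteratedDeriv_eq (heq j hj)
  have hTC : (q (g1 0)).taylorComp (p1 0) k = (q (g2 0)).taylorComp (p2 0) k := by
    rw [hg0]
    unfold FormalMultilinearSeries.taylorComp
    refine Finset.sum_congr rfl fun c _ => ?_
    unfold FormalMultilinearSeries.compAlongOrderedFinpartition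
    congr 1
    funext i
    exact hpj _ (c.partSize_le i)
  have e1 : iteratedDeriv k (fun ρ => f (g1 ρ)) 0
      = (q (g1 0)).taylorComp (p1 0) k (fun _ => (1:ℝ)) := by
    rw [show (fun ρ => f (g1 ρ)) = f ∘ g1 from rfl, iteratedDeriv_eq_iteratedFDeriv,
      ← iteratedFDerivWithin_of_isOpen k hs_open h0s, ← key1]
  have e2 : iteratedDeriv k (fun ρ => f (g2 ρ)) 0
      = (q (g2 0)).taylorComp (p2 0) k (fun _ => (1:ℝ)) := by
    rw [show (fun ρ => f (g2 ρ)) = f ∘ g2 from rfl, iteratedDeriv_eq_iteratedFDeriv,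
      ← iteratedFDerivWithin_of_isOpen k hs_open h0s, ← key2]
  rw [e1, e2, hTC]

lemma deriv_monomial_smul (a : ℝ) (n : ℕ) (c : E) :
    deriv (fun ρ : ℝ => (a * ρ ^ n) • c) = fun ρ => (a * (n * ρ ^ (n - 1))) • c := by
  funext ρ
  rw [deriv_smul_const (by fun_prop)]
  congr 1
  rw [deriv_const_mul _ (by fun_prop), deriv_pow_field]

lemma iteratedDeriv_monomial_smul (b : ℝ) (l : ℕ) (c : E) (j : ℕ) :
    iteratedDeriv j (fun ρ : ℝ => (b * ρ ^ l) • c)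
      = fun ρ => ((b * l.descFactorial j) * ρ ^ (l - j)) • c := by
  induction j with
  | zero => simp
  | succ j ih =>
    rw [iteratedDeriv_succ, ih, deriv_monomial_smul]
    funext ρ
    rw [Nat.descFactorial_succ, ← Nat.sub_sub]
    congr 1
    push_cast
    ring

lemma iteratedDeriv_fun_sum' {ι : Type*} (s : Finset ι) (A : ι → ℝ → E) (j : ℕ)
    (hA : ∀ i ∈ s, ContDiff ℝ (j : ℕ∞) (A i)) :
    iteratedDeriv j (fun ρ => ∑ i ∈ s, A i ρ) = fun ρ => ∑ i ∈ s, iteratedDeriv j (A i) ρ := by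
  induction j with
  | zero => simp
  | succ j ih =>
    rw [iteratedDeriv_succ, ih fun i hi => (hA i hi).of_le (by exact_mod_cast Nat.le_succ j)]
    funext ρ
    rw [deriv_fun_sum fun i hi => ((hA i hi).differentiable_iteratedDeriv j
      (by exact_mod_cast Nat.lt_succ_self j)).differentiableAt]
    simp [iteratedDeriv_succ]

/-- Iterated derivative of the Taylor polynomial at 0 gives back the coefficient. -/
lemma iteratedDeriv_taylor_poly (k j : ℕ) (hj : j ≤ k) (w : ℕ → E) :
    iteratedDeriv j (fun ρ : ℝ => ∑ l ∈ Finset.range (k+1), (ρ ^ l / l.factorial) • w l) 0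
      = w j := by
  have hrw : ∀ l, (fun ρ : ℝ => (ρ ^ l / l.factorial) • w l)
      = fun ρ : ℝ => (((l.factorial : ℝ)⁻¹) * ρ ^ l) • w l := by
    intro l; funext ρ; rw [div_eq_inv_mul]
  rw [iteratedDeriv_fun_sum' _ _ j (fun l _ => by
    rw [hrw l]; exact (contDiff_const.mul (contDiff_id.pow l)).smul contDiff_const)]
  have : ∀ l ∈ Finset.range (k+1),
      iteratedDeriv j (fun ρ : ℝ => (ρ ^ l / l.factorial) • w l) 0
        = if l = j then w j else 0 := by
    intro l _
    rw [hrw l, iteratedDeriv_monomial_smul]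
    rcases eq_or_ne l j with rfl | hlj
    · simp [Nat.descFactorial_self, Nat.sub_self,
        inv_mul_cancel₀ (by exact_mod_cast l.factorial_ne_zero : ((l.factorial : ℝ)) ≠ 0)]
    · rcases lt_or_gt_of_ne hlj with hlt | hgt
      · simp [Nat.descFactorial_eq_zero_iff_lt.mpr hlt, hlj]
      · have : l - j ≠ 0 := Nat.sub_ne_zero_of_lt hgt
        simp [zero_pow this, hlj]
  show ∑ l ∈ Finset.range (k+1),
      iteratedDeriv j (fun ρ : ℝ => (ρ ^ l / l.factorial) • w l) 0 = w j
  rw [Finset.sum_congr rfl this, Finset.sum_ite_eq' (Finset.range (k+1)) j (fun _ => w j)]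
  simp [Nat.lt_succ_of_le hj]

/-- Smoothness of parametrized iterated derivatives. -/
lemma contDiff_iteratedDeriv_param {P : Type*} [NormedAddCommGroup P] [NormedSpace ℝ P]
    (G : P × ℝ → F) (hG : ∀ n : ℕ, ContDiff ℝ (n : ℕ∞) G) (j : ℕ) :
    ∀ n : ℕ, ContDiff ℝ (n : ℕ∞) (fun p : P × ℝ => iteratedDeriv j (fun ρ => G (p.1, ρ)) p.2) := by
  induction j with
  | zero =>
    intro n
    simpa using hG n
  | succ j ih =>
    intro n
    have h1 : ContDiff ℝ ((n : ℕ∞) + 1) (Function.uncurry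
        fun (p : P × ℝ) (ρ : ℝ) => iteratedDeriv j (fun σ => G (p.1, σ)) ρ) := by
      have h := (ih (n+1)).comp
        (((contDiff_fst.comp contDiff_fst).prodMk contDiff_snd) :
          ContDiff ℝ ((n+1 : ℕ) : ℕ∞) fun q : (P × ℝ) × ℝ => (q.1.1, q.2))
      have : ((n+1 : ℕ) : ℕ∞) = (n : ℕ∞) + 1 := by push_cast; ring
      rw [this] at h
      exact h
    have h2 := h1.fderiv (g := fun p : P × ℝ => p.2) contDiff_snd le_rfl
    have h3 := h2.clm_apply (contDiff_const (c := (1:ℝ)))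
    have hrw : (fun p : P × ℝ => iteratedDeriv (j+1) (fun ρ => G (p.1, ρ)) p.2)
        = fun p : P × ℝ =>
          fderiv ℝ (fun ρ => iteratedDeriv j (fun σ => G (p.1, σ)) ρ) p.2 1 := by
      funext p
      rw [iteratedDeriv_succ]
      exact (fderiv_apply_one_eq_deriv).symm
    rw [hrw]
    exact h3

end aux

/-- **Accuracy of the flux time derivative evaluated on the approximate Taylor polynomial.**
Let `1 ≤ k ≤ R`, `f : ℝ^m → ℝ^m` be `C^∞` and `u : ℝ → ℝ^m` be `C^k` near `t`.  If for each
`h > 0` we have vectors `ũ^{(0)}(h), …, ũ^{(k)}(h)` with `ũ^{(0)}(h) = u(t)` and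
`ũ^{(l)}(h) = u^{(l)}(t) + O(h^{R-l+1})` as `h → 0⁺`, and
`T_h(ρ) = ∑_{l=0}^k (ρ^l/l!) ũ^{(l)}(h)`, then
`(d^k/dρ^k)[f(T_h(ρ))]|_{ρ=0} = (d^k/ds^k)[f(u(s))]|_{s=t} + O(h^{R-k+1})` as `h → 0⁺`. -/


theorem flux_time_derivative_on_taylor_accuracy (R k m : ℕ)
    (hk1 : 1 ≤ k) (hkR : k ≤ R) (hm : 1 ≤ m)
    (f : (Fin m → ℝ) → Fin m → ℝ) (hf : ContDiff ℝ (⊤ : ℕ∞) f)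
    (t : ℝ) (u : ℝ → Fin m → ℝ) (hu : ContDiffAt ℝ k u t)
    (utld : ℝ → ℕ → Fin m → ℝ)
    (h0 : ∀ h : ℝ, utld h 0 = u t)
    (hl : ∀ l : ℕ, 1 ≤ l → l ≤ k →
      (fun h : ℝ => utld h l - iteratedDeriv l u t)
        =O[𝓝[>] (0 : ℝ)] fun h : ℝ => h ^ (R - l + 1)) :
    (fun h : ℝ =>
        iteratedDeriv k
          (fun ρ : ℝ =>
            f (∑ l ∈ Finset.range (k + 1), (ρ ^ l / l.factorial) • utld h l)) 0 -
          iteratedDeriv k (fun s : ℝ => f (u s)) t)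
      =O[𝓝[>] (0 : ℝ)] fun h : ℝ => h ^ (R - k + 1) := by
  classical
  set P := (Fin (k+1) → Fin m → ℝ)
  set G : P × ℝ → (Fin m → ℝ) := fun p =>
    f (∑ l : Fin (k+1), ((p.2 ^ (l : ℕ) / (l : ℕ).factorial)) • p.1 l) with hG_def
  have hGn : ∀ n : ℕ, ContDiff ℝ (n : ℕ∞) G := by
    intro n
    apply (hf.of_le (by exact_mod_cast le_top)).comp
    apply ContDiff.sum
    intro l _
    exact ((contDiff_snd.pow _).div_const _).smul ((contDiff_apply ℝ _ l).comp contDiff_fst)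
  set Φ : P → (Fin m → ℝ) := fun v => iteratedDeriv k (fun ρ => G (v, ρ)) 0 with hΦ_def
  have hΦ : ContDiff ℝ 1 Φ := by
    have h := (contDiff_iteratedDeriv_param G hGn k 1).comp
      ((contDiff_id.prodMk contDiff_const) : ContDiff ℝ (1:ℕ∞) fun v : P => (v, (0:ℝ)))
    exact h
  set vstar : P := fun l => iteratedDeriv (l : ℕ) u t with hvstar_def
  set V : ℝ → P := fun h l => utld h (l : ℕ) with hV_def
  -- rewriting of the LHS
  have hLHS : ∀ h : ℝ, iteratedDeriv k
      (fun ρ : ℝ => f (∑ l ∈ Finset.range (k + 1), (ρ ^ l / l.factorial) • utld h l)) 0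
        = Φ (V h) := by
    intro h
    rw [hΦ_def]
    congr 1
    funext ρ
    rw [hG_def]
    congr 1
    rw [← Fin.sum_univ_eq_sum_range (fun l => (ρ ^ l / l.factorial) • utld h l)]
  -- rewriting of the RHS
  have hshift : ∀ j, iteratedDeriv j (fun ρ : ℝ => u (t + ρ)) 0 = iteratedDeriv j u t := by
    intro j
    have := congrFun (iteratedDeriv_comp_const_add j u t) 0
    simpa using this
  have hRHS : iteratedDeriv k (fun s : ℝ => f (u s)) t = Φ vstar := by
    have hsh : iteratedDeriv k (fun s : ℝ => f (u s)) t
        = iteratedDeriv k (fun ρ : ℝ => f (u (t + ρ))) 0 := by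
      have := congrFun (iteratedDeriv_comp_const_add k (fun s : ℝ => f (u s)) t) 0
      simpa using this.symm
    rw [hsh]
    -- Φ vstar as composition with Taylor polynomial
    set w : ℕ → (Fin m → ℝ) := fun l => iteratedDeriv l u t with hw_def
    have hfun : (fun ρ : ℝ => G (vstar, ρ))
        = fun ρ : ℝ => f (∑ l ∈ Finset.range (k+1), (ρ ^ l / l.factorial) • w l) := by
      funext ρ
      show f (∑ l : Fin (k+1), (ρ ^ (l : ℕ) / (l : ℕ).factorial) • vstar l) = _
      exact congrArg f (Fin.sum_univ_eq_sum_range (fun l => (ρ ^ l / l.factorial) • w l) (k+1))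
    have hΦv : Φ vstar = iteratedDeriv k
        (fun ρ : ℝ => f (∑ l ∈ Finset.range (k+1), (ρ ^ l / l.factorial) • w l)) 0 := by
      show iteratedDeriv k (fun ρ : ℝ => G (vstar, ρ)) 0 = _
      rw [hfun]
    rw [hΦv]
    have hg2 : ContDiffAt ℝ k
        (fun ρ : ℝ => ∑ l ∈ Finset.range (k+1), (ρ ^ l / l.factorial) • w l) 0 := by
      apply ContDiff.contDiffAt
      apply ContDiff.sum
      intro l _
      exact ((contDiff_id.pow _).div_const _).smul contDiff_const
    have hg1 : ContDiffAt ℝ k (fun ρ : ℝ => u (t + ρ)) 0 := by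
      have h1 : ContDiffAt ℝ k u ((fun ρ : ℝ => t + ρ) 0) := by simpa using hu
      exact h1.comp 0 (contDiff_const.add contDiff_id).contDiffAt
    refine iteratedDeriv_comp_eq_of_jet_eq k f hf _ _ hg1 hg2 ?_
    intro j hj
    rw [iteratedDeriv_taylor_poly k j hj w, hshift j]
  simp only [hLHS, hRHS]
  -- big-O estimates
  have hVO : (fun h : ℝ => V h - vstar) =O[𝓝[>] (0:ℝ)] fun h : ℝ => h ^ (R - k + 1) := by
    rw [isBigO_pi]
    intro l
    rcases Nat.eq_zero_or_pos (l : ℕ) with hl0 | hlpos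
    · have : ∀ h : ℝ, (V h - vstar) l = 0 := by
        intro h
        show utld h (l : ℕ) - iteratedDeriv (l : ℕ) u t = 0
        rw [hl0, h0 h]
        simp
      refine Asymptotics.isBigO_iff.2 ⟨0, ?_⟩
      filter_upwards with h
      simp [this h]
    · have hlk : (l : ℕ) ≤ k := Nat.lt_succ_iff.mp l.isLt
      have h1 := hl (l : ℕ) hlpos hlk
      have h2 : (fun h : ℝ => h ^ (R - (l:ℕ) + 1)) =O[𝓝[>] (0:ℝ)]
          fun h : ℝ => h ^ (R - k + 1) := by
        refine Asymptotics.isBigO_iff.2 ⟨1, ?_⟩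
        filter_upwards [Ioc_mem_nhdsGT one_pos] with h hh
        rw [one_mul]
        have h0h : 0 ≤ h := le_of_lt hh.1
        have hh1 : h ≤ 1 := hh.2
        rw [Real.norm_of_nonneg (pow_nonneg h0h _), Real.norm_of_nonneg (pow_nonneg h0h _)]
        apply pow_le_pow_of_le_one h0h hh1
        have : R - k ≤ R - (l:ℕ) := Nat.sub_le_sub_left hlk R
        omega
      exact h1.trans h2
  have htend0 : Filter.Tendsto (fun h : ℝ => h ^ (R - k + 1)) (𝓝[>] (0:ℝ)) (𝓝 (0:ℝ)) := by
    have hc : Filter.Tendsto (fun h : ℝ => h ^ (R - k + 1)) (𝓝 (0:ℝ)) (𝓝 (0:ℝ)) := by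
      have := (continuous_pow (R - k + 1) (M := ℝ)).tendsto 0
      simpa [zero_pow (by omega : R - k + 1 ≠ 0)] using this
    exact hc.mono_left nhdsWithin_le_nhds
  have hVt : Filter.Tendsto V (𝓝[>] (0:ℝ)) (𝓝 vstar) := by
    have h1 := (hVO.trans_tendsto htend0).add_const vstar
    have h2 : (fun h : ℝ => (V h - vstar) + vstar) = V := by funext h; abel
    rw [h2, zero_add] at h1
    exact h1
  obtain ⟨K, s, hs, hlip⟩ := hΦ.contDiffAt.exists_lipschitzOnWith (x := vstar)
  have hvs : vstar ∈ s := mem_of_mem_nhds hs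
  have hev : ∀ᶠ h in 𝓝[>] (0:ℝ), V h ∈ s := hVt hs
  have hΦO : (fun h : ℝ => Φ (V h) - Φ vstar) =O[𝓝[>] (0:ℝ)] fun h : ℝ => V h - vstar := by
    refine Asymptotics.isBigO_iff.2 ⟨K, ?_⟩
    filter_upwards [hev] with h hh
    have hd := hlip.dist_le_mul (V h) hh vstar hvs
    rw [dist_eq_norm, dist_eq_norm] at hd
    exact hd
  exact hΦO.trans hVO
end

section
/- Finite differences of perturbed smooth data (induction step of the accuracy proof): Let q ≥ 1 and σ ≥ 1 be integers with 2q ∈ {σ, σ+1}, let x ∈ ℝ, let F: ℝ → ℝ^m be of class C^{2q+3}, a: ℝ → ℝ^m of class C^{3}, b: ℝ → ℝ^m of class C^{1} on a neighborhood of x, and let β_{−q},…,β_q be the unique reals with Σ_{l=−q}^{q} β_l l^r = 0 for r ∈ {0,…,2q}, r ≠ 1, and Σ_{l=−q}^{q} β_l l = 1. Suppose that for each h > 0 we are given vectors g_i(h) ∈ ℝ^m, −q ≤ i ≤ q, satisfying g_i(h) = F(x + i h) + a(x + i h) h^{σ} + b(x + i h) h^{σ+1} + O(h^{σ+2}) as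 h → 0⁺, uniformly in i. Then there exists a constant α depending only on q such that −(1/h) Σ_{i=−q}^{q} β_i g_i(h) = −F'(x) − a'(x) h^{σ} − α F^{(2q+1)}(x) h^{2q} + O(h^{σ+1}) as h → 0⁺; in particular −(1/h) Σ_{i=−q}^{q} β_i g_i(h) = −F'(x) + O(h^{σ}). -/
open Finset Asymptotics Topology

open Filter Set

section Helpers

variable {E : Type*} [NormedAddCommGroup E] [NormedSpace ℝ E]

lemma contDiffAt_deriv' {k : ℕ} {f : ℝ → E} {x : ℝ} (hf : ContDiffAt ℝ (k + 1) f x) :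
    ContDiffAt ℝ k (deriv f) x := by
  have h1 : ContDiffAt ℝ k (fderiv ℝ f) x := hf.fderiv_right (by exact_mod_cast le_rfl)
  have h2 : ContDiffAt ℝ k (fun y => fderiv ℝ f y 1) x := h1.clm_apply contDiffAt_const
  exact h2.congr_of_eventuallyEq (by filter_upwards with y using (fderiv_apply_one_eq_deriv).symm)

lemma taylorO : ∀ (n : ℕ) {f : ℝ → E}, ContDiffAt ℝ (n + 1) f 0 →
    (fun h : ℝ => f h - ∑ k ∈ Finset.range (n + 1), (h ^ k / k.factorial) • iteratedDeriv k f 0)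
      =O[𝓝[≥] (0 : ℝ)] fun h : ℝ => h ^ (n + 1) := by
  intro n
  induction n with
  | zero =>
    intro f hf
    have hd : DifferentiableAt ℝ f 0 := hf.differentiableAt (by simp)
    have h1 : (fun h : ℝ => f h - f 0) =O[𝓝 (0 : ℝ)] fun h : ℝ => h - 0 :=
      hd.hasFDerivAt.isBigO_sub
    have h2 : (fun h : ℝ => f h - f 0) =O[𝓝[≥] (0 : ℝ)] fun h : ℝ => h ^ 1 := by
      simpa using (h1.mono nhdsWithin_le_nhds)
    simpa [Finset.sum_range_one] using h2
  | succ n ih =>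
    intro f hf
    -- derivative is C^(n+1)
    have hdf : ContDiffAt ℝ (n + 1) (deriv f) 0 := by
      have := contDiffAt_deriv' (k := n + 1) (f := f) (x := 0) (by exact_mod_cast hf)
      exact_mod_cast this
    have hS := ih hdf
    obtain ⟨C, hC0, hCw⟩ := hS.exists_nonneg
    have hbd : ∀ᶠ t in 𝓝[≥] (0 : ℝ),
        ‖deriv f t - ∑ k ∈ Finset.range (n + 1), (t ^ k / k.factorial) •
          iteratedDeriv k (deriv f) 0‖ ≤ C * ‖t ^ (n + 1)‖ := hCw.bound
    have hev : ∀ᶠ t in 𝓝[≥] (0 : ℝ), DifferentiableAt ℝ f t := by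
      apply Filter.Eventually.filter_mono nhdsWithin_le_nhds
      exact (hf.eventually (by simp)).mono fun y hy =>
        hy.differentiableAt (by simp)
    have hmem := (hbd.and hev)
    rw [Filter.eventually_iff, mem_nhdsGE_iff_exists_Ico_subset] at hmem
    obtain ⟨δ, hδ0, hδ⟩ := hmem
    rw [isBigO_iff]
    refine ⟨C, ?_⟩
    have hIco : Ico (0 : ℝ) δ ∈ 𝓝[≥] (0 : ℝ) :=
      Ico_mem_nhdsGE_of_mem ⟨le_rfl, hδ0⟩
    filter_upwards [hIco] with h hh
    -- MVT on [0, h]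
    set d : ℕ → E := fun k => iteratedDeriv k f 0 with hd
    set R : ℝ → E := fun y =>
      f y - ∑ k ∈ Finset.range (n + 2), (y ^ k / k.factorial) • d k with hR
    set S : ℝ → E := fun t =>
      deriv f t - ∑ k ∈ Finset.range (n + 1), (t ^ k / k.factorial) •
        iteratedDeriv k (deriv f) 0 with hSdef
    have hRderiv : ∀ t ∈ Icc (0 : ℝ) h, HasDerivWithinAt R (S t) (Icc 0 h) t := by
      intro t ht
      have htδ : t ∈ Ico (0 : ℝ) δ := ⟨ht.1, lt_of_le_of_lt ht.2 hh.2⟩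
      have hft : DifferentiableAt ℝ f t := (hδ htδ).2
      have hP : HasDerivAt (fun y : ℝ => ∑ k ∈ Finset.range (n + 2),
          (y ^ k / k.factorial) • d k)
          (∑ k ∈ Finset.range (n + 2), (((k : ℝ) * t ^ (k - 1)) / k.factorial) • d k) t := by
        apply HasDerivAt.fun_sum
        intro k _
        exact ((hasDerivAt_pow k t).div_const _).smul_const (d k)
      have hsum : (∑ k ∈ Finset.range (n + 2), (((k : ℝ) * t ^ (k - 1)) / k.factorial) • d k)
          = ∑ k ∈ Finset.range (n + 1), (t ^ k / k.factorial) • iteratedDeriv k (deriv f) 0 := by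
        rw [Finset.sum_range_succ' (fun k => (((k : ℝ) * t ^ (k - 1)) / k.factorial) • d k) (n + 1)]
        simp only [Nat.cast_zero, zero_mul, zero_div, zero_smul, add_zero]
        apply Finset.sum_congr rfl
        intro k _
        rw [← iteratedDeriv_succ']
        congr 1
        rw [Nat.factorial_succ]
        push_cast
        have hk : ((k : ℝ) + 1) ≠ 0 := by positivity
        have hkf : ((k.factorial : ℝ)) ≠ 0 := by positivity
        field_simp
      have : HasDerivAt R (S t) t := by
        have h6 := hft.hasDerivAt.sub hP
        rw [hsum] at h6
        exact h6
      exact this.hasDerivWithinAt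
    have hbound : ∀ t ∈ Ico (0 : ℝ) h, ‖S t‖ ≤ C * h ^ (n + 1) := by
      intro t ht
      have htδ : t ∈ Ico (0 : ℝ) δ := ⟨ht.1, lt_of_lt_of_le ht.2 hh.2.le⟩
      have := (hδ htδ).1
      calc ‖S t‖ ≤ C * ‖t ^ (n + 1)‖ := this
        _ = C * t ^ (n + 1) := by rw [norm_pow, Real.norm_eq_abs, abs_of_nonneg ht.1]
        _ ≤ C * h ^ (n + 1) := by
            apply mul_le_mul_of_nonneg_left _ hC0
            exact pow_le_pow_left₀ ht.1 ht.2.le _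
    have hmvt := norm_image_sub_le_of_norm_deriv_le_segment' hRderiv hbound h
      ⟨hh.1, le_rfl⟩
    have hR0 : R 0 = 0 := by
      rw [hR]
      simp only
      rw [Finset.sum_eq_single_of_mem 0 (Finset.mem_range.2 (by omega))]
      · simp [hd]
      · intro k _ hk
        simp [zero_pow hk]
    rw [hR0, sub_zero] at hmvt
    calc ‖R h‖ ≤ C * h ^ (n + 1) * (h - 0) := hmvt
      _ = C * ‖h ^ (n + 1 + 1)‖ := by
          rw [norm_pow, Real.norm_eq_abs, abs_of_nonneg hh.1]; ring

lemma iter_comp : ∀ (k : ℕ) {f : ℝ → E} {x c : ℝ}, ContDiffAt ℝ k f x → ∀ d : ℝ,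
    iteratedDeriv k (fun h : ℝ => d • f (x + c * h)) 0 = (d * c ^ k) • iteratedDeriv k f x := by
  intro k
  induction k with
  | zero => intro f x c hf d; simp
  | succ k ih =>
    intro f x c hf d
    have tend : Tendsto (fun h : ℝ => x + c * h) (𝓝 0) (𝓝 x) := by
      have hc : Continuous (fun h : ℝ => x + c * h) := by continuity
      simpa using hc.tendsto 0
    have hev' : ∀ᶠ h in 𝓝 (0 : ℝ), DifferentiableAt ℝ f (x + c * h) :=
      tend.eventually ((hf.eventually (by simp)).mono fun y hy =>
        hy.differentiableAt (by simp))
    have hev : deriv (fun h : ℝ => d • f (x + c * h)) =ᶠ[𝓝 (0 : ℝ)]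
        (fun h : ℝ => (d * c) • deriv f (x + c * h)) := by
      filter_upwards [hev'] with h hd
      have hi : HasDerivAt (fun h' : ℝ => x + c * h') c h := by
        simpa using ((hasDerivAt_id h).const_mul c).const_add x
      have ho : HasDerivAt f (deriv f (x + c * h)) (x + c * h) := hd.hasDerivAt
      have h3 : HasDerivAt (fun h' : ℝ => f (x + c * h')) (c • deriv f (x + c * h)) h :=
        ho.scomp h hi
      have h5 := (h3.const_smul d).deriv
      rw [show (fun h' : ℝ => d • f (x + c * h')) = d • (fun h' : ℝ => f (x + c * h')) from rfl, h5]
      simp [smul_smul]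
    rw [iteratedDeriv_succ', hev.iteratedDeriv_eq,
      ih (contDiffAt_deriv' hf) (d * c), ← iteratedDeriv_succ',
      show d * c * c ^ k = d * c ^ (k + 1) from by ring]

lemma taylor_comp (n : ℕ) {f : ℝ → E} {x : ℝ} (hf : ContDiffAt ℝ (n + 1) f x) (c : ℝ) :
    (fun h : ℝ => f (x + c * h) -
        ∑ k ∈ Finset.range (n + 1), (c ^ k * h ^ k / k.factorial) • iteratedDeriv k f x)
      =O[𝓝[≥] (0 : ℝ)] fun h : ℝ => h ^ (n + 1) := by
  have hφ : ContDiffAt ℝ (n + 1) (fun h : ℝ => f (x + c * h)) 0 := by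
    have hin : ContDiffAt ℝ (n + 1) (fun h : ℝ => x + c * h) 0 := by
      exact (contDiffAt_const.add (contDiffAt_const.mul contDiffAt_id))
    have hf' : ContDiffAt ℝ (n + 1) f ((fun h : ℝ => x + c * h) 0) := by simpa using hf
    exact hf'.comp 0 hin
  have h1 := taylorO n hφ
  have h2 : ∀ k : ℕ, k ≤ n + 1 →
      iteratedDeriv k (fun h : ℝ => f (x + c * h)) 0 = (c ^ k) • iteratedDeriv k f x := by
    intro k hk
    have := iter_comp k (f := f) (x := x) (c := c)
      (hf.of_le (by exact_mod_cast hk)) 1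
    simpa using this
  apply h1.congr_left
  intro h
  congr 1
  apply Finset.sum_congr rfl
  intro k hk
  rw [h2 k (by simpa using Finset.mem_range.mp hk |>.le), smul_smul]
  congr 1
  ring

lemma taylor_sum (n : ℕ) {f : ℝ → E} {x : ℝ} (hf : ContDiffAt ℝ (n + 1) f x)
    (s : Finset ℤ) (β : ℤ → ℝ) :
    (fun h : ℝ => (∑ i ∈ s, β i • f (x + (i : ℝ) * h)) -
        ∑ k ∈ Finset.range (n + 1),
          ((∑ i ∈ s, β i * (i : ℝ) ^ k) * h ^ k / k.factorial) • iteratedDeriv k f x)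
      =O[𝓝[≥] (0 : ℝ)] fun h : ℝ => h ^ (n + 1) := by
  have hR : ∀ i : ℤ, (fun h : ℝ => β i • (f (x + (i : ℝ) * h) -
      ∑ k ∈ Finset.range (n + 1), ((i : ℝ) ^ k * h ^ k / k.factorial) • iteratedDeriv k f x))
      =O[𝓝[≥] (0 : ℝ)] fun h : ℝ => h ^ (n + 1) := fun i =>
    (taylor_comp n hf (i : ℝ)).const_smul_left (β i)
  have := IsBigO.sum (s := s) (A := fun i => fun h : ℝ => β i • (f (x + (i : ℝ) * h) -
      ∑ k ∈ Finset.range (n + 1), ((i : ℝ) ^ k * h ^ k / k.factorial) • iteratedDeriv k f x))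
    (fun i _ => hR i)
  apply this.congr_left
  intro h
  simp only [Finset.sum_apply]
  simp only [smul_sub, Finset.sum_sub_distrib]
  congr 1
  simp only [Finset.smul_sum, smul_smul]
  rw [Finset.sum_comm]
  apply Finset.sum_congr rfl
  intro k _
  rw [← Finset.sum_smul]
  congr 1
  rw [Finset.sum_mul, Finset.sum_div]
  apply Finset.sum_congr rfl
  intro i _
  ring

lemma pow_isBigO_pow {a b : ℕ} (hab : a ≤ b) :
    (fun h : ℝ => h ^ b) =O[𝓝[>] (0 : ℝ)] fun h => h ^ a := by
  rw [isBigO_iff]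
  refine ⟨1, ?_⟩
  filter_upwards [Ioo_mem_nhdsGT_of_mem (Set.mem_Ico.2 ⟨le_rfl, zero_lt_one⟩)] with h hh
  rw [one_mul, norm_pow, norm_pow, Real.norm_eq_abs, abs_of_pos hh.1]
  exact pow_le_pow_of_le_one hh.1.le hh.2.le hab

lemma div_smul_isBigO {U : ℝ → E} {k : ℕ}
    (hU : U =O[𝓝[>] (0 : ℝ)] fun h => h ^ (k + 1)) :
    (fun h : ℝ => (1 / h) • U h) =O[𝓝[>] (0 : ℝ)] fun h => h ^ k := by
  rw [isBigO_iff] at hU ⊢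
  obtain ⟨C, hC⟩ := hU
  refine ⟨C, ?_⟩
  filter_upwards [hC, self_mem_nhdsWithin] with h h1 h2
  have hp : (0 : ℝ) < h := h2
  rw [norm_smul, norm_div, norm_one, Real.norm_eq_abs, abs_of_pos hp]
  rw [norm_pow, Real.norm_eq_abs, abs_of_pos hp] at h1 ⊢
  calc 1 / h * ‖U h‖ ≤ 1 / h * (C * h ^ (k + 1)) := by
        apply mul_le_mul_of_nonneg_left h1 (by positivity)
    _ = C * h ^ k := by field_simp; ring

lemma key_alg {M : Type*} [AddCommGroup M] [Module ℝ M] {h αc : ℝ} (hne : h ≠ 0) (σ Q : ℕ)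
    (SG SE SF Sa Sb D1 A1 D : M)
    (hdec : SG = SE + SF + h ^ σ • Sa + h ^ (σ + 1) • Sb) :
    -(1 / h) • SG + D1 + h ^ σ • A1 + (αc * h ^ Q) • D =
      -((1 / h) • SE + (1 / h) • (SF - (h • D1 + (αc * h ^ (Q + 1)) • D)) +
        (1 / h) • (h ^ σ • (Sa - h • A1)) + (1 / h) • (h ^ (σ + 1) • Sb)) := by
  subst hdec
  match_scalars <;> field_simp <;> ring

end Helpers

/-- **Finite differences of perturbed smooth data** (induction step of the accuracy proof).
Let `q, σ ≥ 1` with `2q ∈ {σ, σ+1}` and let `β_{-q},…,β_q` be the centered finite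
difference coefficients for the first derivative of order `2q`.  There is a constant `α`
depending only on `q` such that: whenever `F` is `C^{2q+3}`, `a` is `C^3`, `b` is `C^1`
near `x`, and grid values `g_i(h)` satisfy
`g_i(h) = F(x+ih) + a(x+ih) h^σ + b(x+ih) h^{σ+1} + O(h^{σ+2})` for `-q ≤ i ≤ q`,
then `-(1/h) ∑_i β_i g_i(h) = -F'(x) - a'(x) h^σ - α F^{(2q+1)}(x) h^{2q} + O(h^{σ+1})`;
in particular `-(1/h) ∑_i β_i g_i(h) = -F'(x) + O(h^σ)`. -/
theorem fd_of_perturbed_data (m q : ℕ) (hm : 1 ≤ m) (hq : 1 ≤ q) (β : ℤ → ℝ)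
    (hβ0 : ∀ r ≤ 2 * q, r ≠ 1 →
        ∑ l ∈ Finset.Icc (-(q : ℤ)) (q : ℤ), β l * (l : ℝ) ^ r = 0)
    (hβ1 : ∑ l ∈ Finset.Icc (-(q : ℤ)) (q : ℤ), β l * (l : ℝ) = 1) :
    ∃ α : ℝ, ∀ (σ : ℕ), 1 ≤ σ → (2 * q = σ ∨ 2 * q = σ + 1) →
      ∀ (x : ℝ) (F a b : ℝ → Fin m → ℝ) (g : ℝ → ℤ → Fin m → ℝ),
        ContDiffAt ℝ (2 * q + 3) F x → ContDiffAt ℝ 3 a x → ContDiffAt ℝ 1 b x →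
        (∀ i ∈ Finset.Icc (-(q : ℤ)) (q : ℤ),
          (fun h : ℝ =>
              g h i - F (x + (i : ℝ) * h) - h ^ σ • a (x + (i : ℝ) * h) -
                h ^ (σ + 1) • b (x + (i : ℝ) * h))
            =O[𝓝[>] (0 : ℝ)] fun h : ℝ => h ^ (σ + 2)) →
        ((fun h : ℝ =>
            -(1 / h) • (∑ i ∈ Finset.Icc (-(q : ℤ)) (q : ℤ), β i • g h i) +
              deriv F x + h ^ σ • deriv a x +
              (α * h ^ (2 * q)) • iteratedDeriv (2 * q + 1) F x)
          =O[𝓝[>] (0 : ℝ)] fun h : ℝ => h ^ (σ + 1)) ∧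
        ((fun h : ℝ =>
            -(1 / h) • (∑ i ∈ Finset.Icc (-(q : ℤ)) (q : ℤ), β i • g h i) + deriv F x)
          =O[𝓝[>] (0 : ℝ)] fun h : ℝ => h ^ σ) := by
  set I := Finset.Icc (-(q : ℤ)) (q : ℤ) with hI
  set α : ℝ := (∑ l ∈ I, β l * (l : ℝ) ^ (2 * q + 1)) / (2 * q + 1).factorial with hα
  refine ⟨α, ?_⟩
  intro σ hσ1 hcase x F a b g hF ha hb hg
  set L := 𝓝[>] (0 : ℝ) with hL
  have hLle : L ≤ 𝓝[≥] (0 : ℝ) := nhdsWithin_mono _ Set.Ioi_subset_Ici_self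
  -- F part
  have hF' : ContDiffAt ℝ ((2 * q + 1 : ℕ) + 1) F x := by
    apply hF.of_le
    norm_cast
    omega
  have hUF0 := (taylor_sum (2 * q + 1) hF' I β).mono hLle
  have hsumF : ∀ h : ℝ, (∑ k ∈ Finset.range (2 * q + 1 + 1),
      ((∑ i ∈ I, β i * (i : ℝ) ^ k) * h ^ k / k.factorial) • iteratedDeriv k F x)
      = h • deriv F x + (α * h ^ (2 * q + 1)) • iteratedDeriv (2 * q + 1) F x := by
    intro h
    rw [Finset.sum_range_succ]
    congr 1
    · rw [Finset.sum_eq_single_of_mem 1 (Finset.mem_range.2 (by omega))]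
      · simp only [pow_one, hβ1, one_mul, Nat.factorial_one, Nat.cast_one, div_one,
          iteratedDeriv_one]
      · intro k hk hk1
        rw [hβ0 k (by have := Finset.mem_range.mp hk; omega) hk1]
        simp
    · rw [hα]
      congr 1
      ring
  have hUF : (fun h : ℝ => (∑ i ∈ I, β i • F (x + (i : ℝ) * h)) -
      (h • deriv F x + (α * h ^ (2 * q + 1)) • iteratedDeriv (2 * q + 1) F x))
      =O[L] fun h : ℝ => h ^ (2 * q + 1 + 1) :=
    hUF0.congr_left fun h => by rw [hsumF h]
  -- a part
  have ha' : ContDiffAt ℝ ((2 : ℕ) + 1) a x := by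
    apply ha.of_le
    norm_cast
  have hUa0 := (taylor_sum 2 ha' I β).mono hLle
  have hsuma : ∀ h : ℝ, (∑ k ∈ Finset.range (2 + 1),
      ((∑ i ∈ I, β i * (i : ℝ) ^ k) * h ^ k / k.factorial) • iteratedDeriv k a x)
      = h • deriv a x := by
    intro h
    rw [Finset.sum_eq_single_of_mem 1 (Finset.mem_range.2 (by omega))]
    · simp only [pow_one, hβ1, one_mul, Nat.factorial_one, Nat.cast_one, div_one,
        iteratedDeriv_one]
    · intro k hk hk1
      rw [hβ0 k (by have := Finset.mem_range.mp hk; omega) hk1]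
      simp
  have hUa : (fun h : ℝ => (∑ i ∈ I, β i • a (x + (i : ℝ) * h)) - h • deriv a x)
      =O[L] fun h : ℝ => h ^ (2 + 1) :=
    hUa0.congr_left fun h => by rw [hsuma h]
  -- b part
  have hb' : ContDiffAt ℝ ((0 : ℕ) + 1) b x := by
    apply hb.of_le
    norm_cast
  have hUb0 := (taylor_sum 0 hb' I β).mono hLle
  have hsumb : ∀ h : ℝ, (∑ k ∈ Finset.range (0 + 1),
      ((∑ i ∈ I, β i * (i : ℝ) ^ k) * h ^ k / k.factorial) • iteratedDeriv k b x)
      = 0 := by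
    intro h
    rw [Finset.sum_range_one, hβ0 0 (by omega) (by omega)]
    simp
  have hUb : (fun h : ℝ => ∑ i ∈ I, β i • b (x + (i : ℝ) * h))
      =O[L] fun h : ℝ => h ^ (0 + 1) :=
    hUb0.congr_left fun h => by rw [hsumb h, sub_zero]
  -- error part
  have hUe : (fun h : ℝ => ∑ i ∈ I, β i • (g h i - F (x + (i : ℝ) * h) -
      h ^ σ • a (x + (i : ℝ) * h) - h ^ (σ + 1) • b (x + (i : ℝ) * h)))
      =O[L] fun h : ℝ => h ^ (σ + 2) :=
    (IsBigO.sum fun i hi => (hg i hi).const_smul_left (β i)).congr_left fun h => by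
      simp only [Finset.sum_apply, Pi.smul_apply]
  -- decomposition of the grid sum
  have hSG : ∀ h : ℝ, (∑ i ∈ I, β i • g h i) =
      (∑ i ∈ I, β i • (g h i - F (x + (i : ℝ) * h) - h ^ σ • a (x + (i : ℝ) * h) -
        h ^ (σ + 1) • b (x + (i : ℝ) * h))) +
      (∑ i ∈ I, β i • F (x + (i : ℝ) * h)) +
      h ^ σ • (∑ i ∈ I, β i • a (x + (i : ℝ) * h)) +
      h ^ (σ + 1) • (∑ i ∈ I, β i • b (x + (i : ℝ) * h)) := by
    intro h
    rw [Finset.smul_sum, Finset.smul_sum, ← Finset.sum_add_distrib,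
      ← Finset.sum_add_distrib, ← Finset.sum_add_distrib]
    apply Finset.sum_congr rfl
    intro i _
    module
  -- big-O pieces
  have OV1 : (fun h : ℝ => (1 / h) • (∑ i ∈ I, β i • (g h i - F (x + (i : ℝ) * h) -
      h ^ σ • a (x + (i : ℝ) * h) - h ^ (σ + 1) • b (x + (i : ℝ) * h))))
      =O[L] fun h : ℝ => h ^ (σ + 1) := div_smul_isBigO hUe
  have OV2 : (fun h : ℝ => (1 / h) • ((∑ i ∈ I, β i • F (x + (i : ℝ) * h)) -
      (h • deriv F x + (α * h ^ (2 * q + 1)) • iteratedDeriv (2 * q + 1) F x)))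
      =O[L] fun h : ℝ => h ^ (σ + 1) :=
    (div_smul_isBigO hUF).trans (pow_isBigO_pow (by omega))
  have OV3 : (fun h : ℝ => (1 / h) • (h ^ σ • ((∑ i ∈ I, β i • a (x + (i : ℝ) * h)) -
      h • deriv a x))) =O[L] fun h : ℝ => h ^ (σ + 1) := by
    have h1 : (fun h : ℝ => h ^ σ • ((∑ i ∈ I, β i • a (x + (i : ℝ) * h)) - h • deriv a x))
        =O[L] fun h : ℝ => h ^ (σ + 2 + 1) := by
      have h0 := (isBigO_refl (fun h : ℝ => h ^ σ) L).smul hUa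
      simpa [← pow_add, add_assoc] using h0
    exact (div_smul_isBigO h1).trans (pow_isBigO_pow (by omega))
  have OV4 : (fun h : ℝ => (1 / h) • (h ^ (σ + 1) •
      (∑ i ∈ I, β i • b (x + (i : ℝ) * h)))) =O[L] fun h : ℝ => h ^ (σ + 1) := by
    have h1 : (fun h : ℝ => h ^ (σ + 1) • (∑ i ∈ I, β i • b (x + (i : ℝ) * h)))
        =O[L] fun h : ℝ => h ^ (σ + 1 + 1) := by
      have h0 := (isBigO_refl (fun h : ℝ => h ^ (σ + 1)) L).smul hUb
      simpa [← pow_add, add_assoc, ← pow_succ] using h0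
    exact div_smul_isBigO h1
  -- first conclusion
  have key1 : (fun h : ℝ =>
      -(1 / h) • (∑ i ∈ I, β i • g h i) + deriv F x + h ^ σ • deriv a x +
        (α * h ^ (2 * q)) • iteratedDeriv (2 * q + 1) F x)
      =O[L] fun h : ℝ => h ^ (σ + 1) := by
    have heq : (fun h : ℝ =>
        -(1 / h) • (∑ i ∈ I, β i • g h i) + deriv F x + h ^ σ • deriv a x +
          (α * h ^ (2 * q)) • iteratedDeriv (2 * q + 1) F x) =ᶠ[L]
        (fun h : ℝ =>
          -((1 / h) • (∑ i ∈ I, β i • (g h i - F (x + (i : ℝ) * h) -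
              h ^ σ • a (x + (i : ℝ) * h) - h ^ (σ + 1) • b (x + (i : ℝ) * h))) +
            (1 / h) • ((∑ i ∈ I, β i • F (x + (i : ℝ) * h)) -
              (h • deriv F x + (α * h ^ (2 * q + 1)) • iteratedDeriv (2 * q + 1) F x)) +
            (1 / h) • (h ^ σ • ((∑ i ∈ I, β i • a (x + (i : ℝ) * h)) - h • deriv a x)) +
            (1 / h) • (h ^ (σ + 1) • (∑ i ∈ I, β i • b (x + (i : ℝ) * h))))) := by
      filter_upwards [self_mem_nhdsWithin] with h hh
      have hne : h ≠ 0 := ne_of_gt hh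
      exact key_alg hne σ (2 * q) _ _ _ _ _ _ _ _ (hSG h)
    exact heq.trans_isBigO (((OV1.add OV2).add OV3).add OV4).neg_left
  constructor
  · exact key1
  · -- second conclusion
    have O2a : (fun h : ℝ => h ^ σ • deriv a x) =O[L] fun h : ℝ => h ^ σ := by
      rw [isBigO_iff]
      refine ⟨‖deriv a x‖, ?_⟩
      filter_upwards with h
      rw [norm_smul]
      exact le_of_eq (by rw [mul_comm])
    have O2b : (fun h : ℝ => (α * h ^ (2 * q)) • iteratedDeriv (2 * q + 1) F x)
        =O[L] fun h : ℝ => h ^ σ := by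
      have h1 : (fun h : ℝ => (α * h ^ (2 * q)) • iteratedDeriv (2 * q + 1) F x)
          =O[L] fun h : ℝ => h ^ (2 * q) := by
        rw [isBigO_iff]
        refine ⟨‖α • iteratedDeriv (2 * q + 1) F x‖, ?_⟩
        filter_upwards with h
        have : (α * h ^ (2 * q)) • iteratedDeriv (2 * q + 1) F x
            = h ^ (2 * q) • (α • iteratedDeriv (2 * q + 1) F x) := by
          rw [smul_smul, mul_comm]
        rw [this, norm_smul]
        exact le_of_eq (by rw [mul_comm])
      exact h1.trans (pow_isBigO_pow (by omega))
    have key1' : (fun h : ℝ =>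
        -(1 / h) • (∑ i ∈ I, β i • g h i) + deriv F x + h ^ σ • deriv a x +
          (α * h ^ (2 * q)) • iteratedDeriv (2 * q + 1) F x)
        =O[L] fun h : ℝ => h ^ σ := key1.trans (pow_isBigO_pow (by omega))
    have hfin := (key1'.sub O2a).sub O2b
    apply hfin.congr_left
    intro h
    abel
end
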